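/- For a self-conjugate partition λ, the number n_1(λ) of hooks of length 1 is odd if and only if the side length of the Durfee square of λ is strictly larger than the largest part of the partition formed by the columns to the right of the Durfee square (with the convention that this largest part is 0 if there are no such columns, and λ is nonempty). -/

import Mathlib

open Finset PowerSeries
open scoped Classical

noncomputable section

/-- Product topology on formal power series, coefficients discrete: the usual topology of
formal power series, in which infinite sums/products of series of increasing order converge. -/
instance psTop (R : Type*) : TopologicalSpace (PowerSeries R) :=
  @Pi.topologicalSpace (Unit →₀ ℕ) (fun _ => R) (fun _ => ⊥)

/-- `rowLen p i` is the `(i+1)`-st largest part of `p` (0 if none), i.e. `λ_{i+1}`. -/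
def rowLen {n : ℕ} (p : n.Partition) (i : ℕ) : ℕ :=
  ((p.parts.sort (· ≤ ·)).reverse).getD i 0

/-- `colLen p j` is the length of the `(j+1)`-st column of the Young diagram, i.e. `λ'_{j+1}`. -/
def colLen {n : ℕ} (p : n.Partition) (j : ℕ) : ℕ :=
  (p.parts.filter (fun a => j < a)).card

lemma countP_sorted (j : ℕ) : ∀ (l : List ℕ), l.Pairwise (· ≥ ·) → ∀ i,
    (j < l.getD i 0 ↔ i < (l.filter (fun a => j < a)).length) := by
  intro l
  induction l with
  | nil => intro _ i; simp
  | cons a t ih =>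
    intro hs i
    rw [List.pairwise_cons] at hs
    obtain ⟨hab, hst⟩ := hs
    by_cases hja : j < a
    · cases i with
      | zero => simp [List.filter_cons, hja]
      | succ i =>
        rw [List.getD_cons_succ, ih hst i, List.filter_cons,
          if_pos (by simpa using hja), List.length_cons]
        omega
    · have ht : t.filter (fun a => decide (j < a)) = [] := by
        apply List.filter_eq_nil_iff.2
        intro b hb
        simp only [decide_eq_true_eq]
        exact fun h => hja (lt_of_lt_of_le h (hab b hb))
      have hlen : (a :: t).filter (fun a => decide (j < a)) = [] := by
        rw [List.filter_cons]
        simp [hja, ht]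
      rw [hlen]
      cases i with
      | zero =>
        rw [List.getD_cons_zero]
        simp only [List.length_nil]
        omega
      | succ i =>
        rw [List.getD_cons_succ]
        have h0 : ¬ j < t.getD i 0 := by
          rcases lt_or_ge i t.length with h | h
          · rw [List.getD_eq_getElem _ _ h]
            exact fun hc => hja (lt_of_lt_of_le hc (hab _ (t.getElem_mem h)))
          · rw [List.getD_eq_default _ _ h]; omega
        simp only [List.length_nil]
        omega

lemma row_col {n : ℕ} (p : n.Partition) (i j : ℕ) :
    j < rowLen p i ↔ i < colLen p j := by
  have h2 : ((p.parts.sort (· ≤ ·)).reverse : Multiset ℕ) = p.parts := by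
    rw [← Multiset.coe_reverse, List.reverse_reverse, Multiset.sort_eq]
  have h3 : List.Pairwise (· ≥ ·) (p.parts.sort (· ≤ ·)).reverse := by
    rw [List.pairwise_reverse]
    exact Multiset.pairwise_sort p.parts (· ≤ ·)
  have hcol : colLen p j
      = ((p.parts.sort (· ≤ ·)).reverse.filter (fun a => decide (j < a))).length := by
    rw [colLen]
    conv_lhs => rw [← h2]
    rw [Multiset.filter_coe, Multiset.coe_card]
  rw [rowLen, hcol]
  exact countP_sorted j _ h3 i

lemma nat_le_of_lt_imp {a b : ℕ} (h : ∀ j, j < a → j < b) : a ≤ b := by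
  by_contra hc; exact absurd (h b (by omega)) (by omega)

lemma rowLen_anti {n : ℕ} (p : n.Partition) {i i' : ℕ} (h : i ≤ i') :
    rowLen p i' ≤ rowLen p i := by
  apply nat_le_of_lt_imp
  intro j hj
  rw [row_col] at hj ⊢
  omega

lemma rowLen_le {n : ℕ} (p : n.Partition) (i : ℕ) : rowLen p i ≤ n := by
  apply nat_le_of_lt_imp
  intro j hj
  rw [row_col] at hj
  have hpos : 0 < (p.parts.filter (fun a => j < a)).card := by
    have : i < colLen p j := hj
    rw [colLen] at this; omega
  obtain ⟨a, ha⟩ := Multiset.card_pos_iff_exists_mem.1 hpos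
  obtain ⟨ha1, ha2⟩ := Multiset.mem_filter.1 ha
  have := Multiset.single_le_sum (fun x _ => Nat.zero_le x) a ha1
  rw [p.parts_sum] at this
  omega

/-- A partition is self-conjugate iff every row equals the corresponding column. -/
def SelfConj {n : ℕ} (p : n.Partition) : Prop := ∀ i, rowLen p i = colLen p i

/-- `hookCount p t` = number of cells of the Young diagram of `p` with hook length exactly `t`;
the hook length of the (0-indexed) cell `(i,j)` is `(λ_i - j) + (λ'_j - i) - 1`. -/
def hookCount {n : ℕ} (p : n.Partition) (t : ℕ) : ℕ :=
  ((range n ×ˢ range n).filter (fun c =>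
    c.2 < rowLen p c.1 ∧ (rowLen p c.1 - c.2) + (colLen p c.2 - c.1) - 1 = t)).card

/-- Infinite Pochhammer-type product `(a; b)_∞ = ∏_{j ≥ 0} (1 - a b^j)`. -/
def poch {R : Type*} [CommRing R] (a b : PowerSeries R) : PowerSeries R :=
  ∏' j : ℕ, (1 - a * b ^ j)

/-- Finite Pochhammer symbol `(a; b)_m = ∏_{j=0}^{m-1} (1 - a b^j)`. -/
def pochN {R : Type*} [CommRing R] (a b : PowerSeries R) (m : ℕ) : PowerSeries R :=
  ∏ j ∈ range m, (1 - a * b ^ j)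

/-- Total number of hooks of length `t` among self-conjugate partitions of `n`. -/
def astar (t n : ℕ) : ℕ :=
  ∑ p : n.Partition, if SelfConj p then hookCount p t else 0

/-- Number of self-conjugate partitions of `n`. -/
def sc (n : ℕ) : ℕ := (univ.filter fun p : n.Partition => SelfConj p).card

/-- Number of partitions of `n` into distinct odd parts. -/
def qstar (n : ℕ) : ℕ :=
  (univ.filter fun p : n.Partition => p.parts.Nodup ∧ ∀ a ∈ p.parts, Odd a).card

/-- The side length of the Durfee square of `p`: the number of `i` with `λ_{i+1} ≥ i+1`. -/
def durfee {n : ℕ} (p : n.Partition) : ℕ :=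
  ((range n).filter fun i => i < rowLen p i).card

lemma durfee_iff {n : ℕ} (p : n.Partition) (i : ℕ) :
    i < rowLen p i ↔ i < durfee p := by
  constructor
  · intro h
    have hin : i < n := lt_of_lt_of_le h (rowLen_le p i)
    have hsub : range (i + 1) ⊆ (range n).filter fun k => k < rowLen p k := by
      intro k hk
      rw [mem_range] at hk
      have hki : k ≤ i := by omega
      refine mem_filter.2 ⟨mem_range.2 (by omega), ?_⟩
      exact lt_of_le_of_lt hki (lt_of_lt_of_le h (rowLen_anti p hki))
    have := card_le_card hsub
    rw [card_range] at this
    rw [durfee]; omega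
  · intro h
    by_contra hc
    push_neg at hc
    have hsub : ((range n).filter fun k => k < rowLen p k) ⊆ range i := by
      intro k hk
      obtain ⟨_, hk2⟩ := mem_filter.1 hk
      rw [mem_range]
      by_contra hki
      push_neg at hki
      exact absurd hk2 (by have := rowLen_anti p hki; omega)
    have := card_le_card hsub
    rw [card_range] at this
    rw [durfee] at h; omega

lemma even_card_of_invol {α : Type*} [DecidableEq α] (f : α → α) :
    ∀ S : Finset α, (∀ a ∈ S, f a ∈ S) → (∀ a ∈ S, f (f a) = a) → (∀ a ∈ S, f a ≠ a) →
    Even S.card := by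
  intro S
  induction S using Finset.strongInduction with
  | _ S ih =>
    intro hmem hinv hne
    rcases S.eq_empty_or_nonempty with rfl | ⟨a, ha⟩
    · simp
    · have hfa : f a ∈ S := hmem a ha
      have hfaa : f a ≠ a := hne a ha
      set T := (S.erase a).erase (f a) with hT
      have hTmem : ∀ x, x ∈ T ↔ x ∈ S ∧ x ≠ a ∧ x ≠ f a := by
        intro x
        simp only [hT, mem_erase]
        tauto
      have hsub : T ⊂ S := by
        refine Finset.ssubset_iff_of_subset (fun x hx => ((hTmem x).1 hx).1) |>.2 ⟨a, ha, ?_⟩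
        intro hc
        exact ((hTmem a).1 hc).2.1 rfl
      have hfaS : f a ∈ S.erase a := mem_erase.2 ⟨hfaa, hfa⟩
      have hcard : S.card = T.card + 2 := by
        rw [hT, card_erase_of_mem hfaS, card_erase_of_mem ha]
        have h1 : 1 ≤ (S.erase a).card := card_pos.2 ⟨f a, hfaS⟩
        have h2 : (S.erase a).card = S.card - 1 := card_erase_of_mem ha
        omega
      have hE : Even T.card := by
        refine ih T hsub ?_ ?_ ?_
        · intro x hx
          obtain ⟨hxS, hxa, hxfa⟩ := (hTmem x).1 hx
          refine (hTmem (f x)).2 ⟨hmem x hxS, ?_, ?_⟩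
          · intro hc
            have h := hinv x hxS
            rw [hc] at h
            exact hxfa h.symm
          · intro hc
            have := hinv x hxS
            rw [hc, hinv a ha] at this
            exact hxa this.symm
        · intro x hx; exact hinv x ((hTmem x).1 hx).1
        · intro x hx; exact hne x ((hTmem x).1 hx).1
      obtain ⟨k, hk⟩ := hE
      exact ⟨k + 1, by omega⟩

/-- For a nonempty self-conjugate partition, `n_1(λ)` is odd iff the side of the Durfee
square strictly exceeds the largest part of the twin partition formed by the columns to
the right of the Durfee square (that largest part is `colLen p (durfee p)`, i.e. `λ'_{d+1}`). -/
theorem odd_one_hooks_iff (n : ℕ) (hn : 1 ≤ n) (p : n.Partition) (hp : SelfConj p) :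
    Odd (hookCount p 1) ↔ colLen p (durfee p) < durfee p := by
  set d := durfee p with hd
  -- d ≥ 1
  have hd1 : 1 ≤ d := by
    have hcard : p.parts.card ≠ 0 := by
      intro h
      rw [Multiset.card_eq_zero] at h
      have hs := p.parts_sum
      rw [h] at hs
      simp at hs
      omega
    have hfil : p.parts.filter (fun a => 0 < a) = p.parts :=
      Multiset.filter_eq_self.2 (fun a ha => p.parts_pos ha)
    have h0 : 0 < rowLen p 0 := by
      rw [row_col, colLen, hfil]
      exact Nat.pos_of_ne_zero hcard
    exact (durfee_iff p 0).1 h0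
  set S := (range n ×ˢ range n).filter (fun c : ℕ × ℕ =>
    c.2 < rowLen p c.1 ∧ (rowLen p c.1 - c.2) + (colLen p c.2 - c.1) - 1 = 1) with hS
  have hhc : hookCount p 1 = S.card := rfl
  have hmem : ∀ c : ℕ × ℕ, c ∈ S ↔
      (c.1 < n ∧ c.2 < n ∧ rowLen p c.1 = c.2 + 1 ∧ colLen p c.2 = c.1 + 1) := by
    intro c
    rw [hS, mem_filter, mem_product, mem_range, mem_range]
    constructor
    · rintro ⟨⟨h1, h2⟩, h3, h4⟩
      have h5 : c.1 < colLen p c.2 := (row_col p c.1 c.2).1 h3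
      exact ⟨h1, h2, by omega, by omega⟩
    · rintro ⟨h1, h2, h3, h4⟩
      exact ⟨⟨h1, h2⟩, by omega, by omega⟩
  have hclosed : ∀ c ∈ S, Prod.swap c ∈ S := by
    intro c hc
    obtain ⟨h1, h2, h3, h4⟩ := (hmem c).1 hc
    refine (hmem c.swap).2 ⟨h2, h1, ?_, ?_⟩
    · rw [Prod.fst_swap, Prod.snd_swap, hp c.2]; exact h4
    · rw [Prod.fst_swap, Prod.snd_swap, ← hp c.1]; exact h3
  set F := S.filter (fun c : ℕ × ℕ => Prod.swap c = c) with hF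
  -- parity reduction
  have hsplit : F.card + (S.filter (fun c : ℕ × ℕ => ¬ Prod.swap c = c)).card = S.card := by
    rw [hF]
    exact Finset.card_filter_add_card_filter_not _
  have hEv : Even ((S.filter (fun c : ℕ × ℕ => ¬ Prod.swap c = c)).card) := by
    apply even_card_of_invol Prod.swap
    · intro a ha
      obtain ⟨ha1, ha2⟩ := mem_filter.1 ha
      refine mem_filter.2 ⟨hclosed a ha1, ?_⟩
      rw [Prod.swap_swap]
      intro hc
      exact ha2 hc.symm
    · intro a _; exact Prod.swap_swap a
    · intro a ha; exact (mem_filter.1 ha).2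
  have hparity : Odd S.card ↔ Odd F.card := by
    obtain ⟨k, hk⟩ := hEv
    rw [Nat.odd_iff, Nat.odd_iff]
    omega
  -- fixed points characterization
  have hFmem : ∀ c : ℕ × ℕ, c ∈ F ↔
      (c.1 = c.2 ∧ c.1 < n ∧ rowLen p c.1 = c.1 + 1) := by
    intro c
    rw [hF, mem_filter, hmem, Prod.ext_iff, Prod.fst_swap, Prod.snd_swap]
    constructor
    · rintro ⟨⟨h1, h2, h3, h4⟩, h5, h6⟩
      exact ⟨h6, h1, by rw [h3, h5]⟩
    · rintro ⟨h1, h2, h3⟩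
      refine ⟨⟨h2, by omega, by omega, ?_⟩, by omega, by omega⟩
      rw [← h1, ← hp c.1]
      omega
  have hFone : F.card ≤ 1 := by
    apply Finset.card_le_one.2
    intro a ha b hb
    obtain ⟨ha1, _, ha3⟩ := (hFmem a).1 ha
    obtain ⟨hb1, _, hb3⟩ := (hFmem b).1 hb
    have : a.1 = b.1 := by
      rcases Nat.lt_trichotomy a.1 b.1 with h | h | h
      · have := rowLen_anti p (le_of_lt h); omega
      · exact h
      · have := rowLen_anti p (le_of_lt h); omega
    exact Prod.ext this (by omega)
  -- existence of fixed point ↔ rowLen p (d-1) = d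
  have hrd : d - 1 < rowLen p (d - 1) := (durfee_iff p (d - 1)).2 (by omega)
  have hex : F.Nonempty ↔ rowLen p (d - 1) = d := by
    constructor
    · rintro ⟨c, hc⟩
      obtain ⟨h1, h2, h3⟩ := (hFmem c).1 hc
      have hcd : c.1 < d := by
        rw [hd, ← durfee_iff]; omega
      have : ¬ (c.1 + 1 < d) := by
        intro hlt
        have h4 : c.1 + 1 < rowLen p (c.1 + 1) := by rw [hd] at hlt; exact (durfee_iff p _).2 hlt
        have h5 := rowLen_anti p (show c.1 ≤ c.1 + 1 by omega)
        omega
      have heq : c.1 = d - 1 := by omega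
      rw [← heq]
      omega
    · intro h
      refine ⟨(d - 1, d - 1), (hFmem _).2 ⟨rfl, ?_, ?_⟩⟩
      · show d - 1 < n
        have := rowLen_le p (d - 1)
        omega
      · show rowLen p (d - 1) = (d - 1) + 1
        omega
  -- final equivalence
  have hfin : rowLen p (d - 1) = d ↔ colLen p d < d := by
    have hr := row_col p (d - 1) d
    omega
  rw [hhc, hparity, ← hfin, ← hex]
  constructor
  · intro h
    rcases Nat.odd_iff.1 h with hk
    exact card_pos.1 (by omega)
  · intro h
    have := card_pos.2 h
    rw [Nat.odd_iff]
    omega
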